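/- arXiv:1006.4251 — 4 statements merged into one kernel-verified Lean document; each statement's English description precedes it below -/
import Mathlib

section
/- Let ⟨A, Δ⟩ be a Jordan coalgebra over a field k of characteristic not 2 whose dual algebra A* is unital, and let ⟨L(A), Δ_L⟩ be the Lie coalgebra of Theorem 1. If L is a coideal of ⟨L(A), Δ_L⟩ that is closed under the map π and satisfies L ⊆ U^⊥, then V = A ∩ L is a coideal of ⟨A, Δ⟩, and L₁*(V) ⊆ L ⊆ L₂*(V). -/
open TensorProduct

variable {k : Type*} [Field k] {A : Type*} [AddCommGroup A] [Module k A]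

/-- The multiplication on the dual space `A*` induced by a comultiplication `Δ`:
`⟨fg, a⟩ = Σ ⟨f, a₍₁₎⟩⟨g, a₍₂₎⟩`. -/
noncomputable def dmul (Δ : A →ₗ[k] A ⊗[k] A) (f g : (A →ₗ[k] k)) : (A →ₗ[k] k) :=
  (TensorProduct.lid k k).toLinearMap ∘ₗ TensorProduct.map f g ∘ₗ Δ

/-- The left action `f·a = Σ a₍₁₎ ⟨f, a₍₂₎⟩` of the dual algebra on `A`. -/
noncomputable def lact (Δ : A →ₗ[k] A ⊗[k] A) (f : (A →ₗ[k] k)) : A →ₗ[k] A :=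
  (TensorProduct.rid k A).toLinearMap ∘ₗ TensorProduct.map LinearMap.id f ∘ₗ Δ

/-- The right action `a·f = Σ ⟨f, a₍₁₎⟩ a₍₂₎` of the dual algebra on `A`. -/
noncomputable def ract (Δ : A →ₗ[k] A ⊗[k] A) (f : (A →ₗ[k] k)) : A →ₗ[k] A :=
  (TensorProduct.lid k A).toLinearMap ∘ₗ TensorProduct.map f LinearMap.id ∘ₗ Δ

/-- `⟨A, Δ⟩` is a Jordan coalgebra: its dual algebra is commutative and satisfies
the Jordan identity `((ff)g)f = (ff)(gf)`. -/
def IsJordanCoalgebra (Δ : A →ₗ[k] A ⊗[k] A) : Prop :=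
  (∀ f g : (A →ₗ[k] k), dmul Δ f g = dmul Δ g f) ∧
  (∀ f g : (A →ₗ[k] k),
    dmul Δ (dmul Δ (dmul Δ f f) g) f = dmul Δ (dmul Δ f f) (dmul Δ g f))

/-- `B` is a subcoalgebra: `Δ(B) ⊆ B ⊗ B`. -/
def IsSubcoalgebra (Δ : A →ₗ[k] A ⊗[k] A) (B : Submodule k A) : Prop :=
  ∀ b ∈ B, Δ b ∈ LinearMap.range (TensorProduct.map B.subtype B.subtype)

/-- `B` is a coideal: `Δ(B) ⊆ B ⊗ A + A ⊗ B`. -/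
def IsCoideal (Δ : A →ₗ[k] A ⊗[k] A) (B : Submodule k A) : Prop :=
  ∀ b ∈ B, Δ b ∈
    LinearMap.range (TensorProduct.map B.subtype (LinearMap.id (R := k) (M := A))) ⊔
    LinearMap.range (TensorProduct.map (LinearMap.id (R := k) (M := A)) B.subtype)

/-- A derivation of the dual algebra `A*`. -/
def IsDerivation (Δ : A →ₗ[k] A ⊗[k] A)
    (d : (A →ₗ[k] k) →ₗ[k] (A →ₗ[k] k)) : Prop :=
  ∀ f g : (A →ₗ[k] k), d (dmul Δ f g) = dmul Δ (d f) g + dmul Δ f (d g)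

theorem dmul_add_left (Δ : A →ₗ[k] A ⊗[k] A) (f₁ f₂ g : (A →ₗ[k] k)) :
    dmul Δ (f₁ + f₂) g = dmul Δ f₁ g + dmul Δ f₂ g := by
  unfold dmul; rw [TensorProduct.map_add_left]; ext a; simp

theorem dmul_add_right (Δ : A →ₗ[k] A ⊗[k] A) (f g₁ g₂ : (A →ₗ[k] k)) :
    dmul Δ f (g₁ + g₂) = dmul Δ f g₁ + dmul Δ f g₂ := by
  unfold dmul; rw [TensorProduct.map_add_right]; ext a; simp

theorem dmul_smul_left (Δ : A →ₗ[k] A ⊗[k] A) (c : k) (f g : (A →ₗ[k] k)) :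
    dmul Δ (c • f) g = c • dmul Δ f g := by
  unfold dmul; rw [TensorProduct.map_smul_left]; ext a; simp

theorem dmul_smul_right (Δ : A →ₗ[k] A ⊗[k] A) (c : k) (f g : (A →ₗ[k] k)) :
    dmul Δ f (c • g) = c • dmul Δ f g := by
  unfold dmul; rw [TensorProduct.map_smul_right]; ext a; simp

theorem dmul_zero_left (Δ : A →ₗ[k] A ⊗[k] A) (g : (A →ₗ[k] k)) :
    dmul Δ (0 : (A →ₗ[k] k)) g = 0 := by
  ext a; simp [dmul]

theorem dmul_zero_right (Δ : A →ₗ[k] A ⊗[k] A) (f : (A →ₗ[k] k)) :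
    dmul Δ f (0 : (A →ₗ[k] k)) = 0 := by
  ext a; simp [dmul]

/-- The operator of right multiplication `f' : g ↦ gf` on the dual algebra. -/
noncomputable def Rop (Δ : A →ₗ[k] A ⊗[k] A) (f : (A →ₗ[k] k)) :
    (A →ₗ[k] k) →ₗ[k] (A →ₗ[k] k) where
  toFun g := dmul Δ g f
  map_add' g₁ g₂ := dmul_add_left Δ g₁ g₂ f
  map_smul' c g := dmul_smul_left Δ c g f

/-- The inner derivation `[f,g] = f'g' - g'f'` (in right-operator convention,
`x[f,g] = (xf)g - (xg)f`). -/
noncomputable def commD (Δ : A →ₗ[k] A ⊗[k] A) (f g : (A →ₗ[k] k)) :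
    (A →ₗ[k] k) →ₗ[k] (A →ₗ[k] k) :=
  Rop Δ g ∘ₗ Rop Δ f - Rop Δ f ∘ₗ Rop Δ g

/-- The space of inner derivations of the dual algebra. -/
noncomputable def IntDer (Δ : A →ₗ[k] A ⊗[k] A) :
    Submodule k ((A →ₗ[k] k) →ₗ[k] (A →ₗ[k] k)) :=
  Submodule.span k {d | ∃ f g : (A →ₗ[k] k), d = commD Δ f g}

/-- A weakly inner derivation of the dual algebra: a derivation that agrees with some
inner derivation on every finite-dimensional subcoalgebra. -/
def IsWIntDer (Δ : A →ₗ[k] A ⊗[k] A)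
    (d : (A →ₗ[k] k) →ₗ[k] (A →ₗ[k] k)) : Prop :=
  IsDerivation Δ d ∧
  ∀ B : Submodule k A, IsSubcoalgebra Δ B → FiniteDimensional k B →
    ∃ i ∈ IntDer Δ, ∀ f : (A →ₗ[k] k), ∀ b ∈ B, d f b = i f b

/-- The space of weakly inner derivations, as a submodule of `End(A*)`. -/
noncomputable def WIntDer (Δ : A →ₗ[k] A ⊗[k] A) :
    Submodule k ((A →ₗ[k] k) →ₗ[k] (A →ₗ[k] k)) where
  carrier := {d | IsWIntDer Δ d}
  zero_mem' := by
    refine ⟨fun f g => by simp [dmul_zero_left, dmul_zero_right],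
      fun B hB hfin => ⟨0, Submodule.zero_mem _, fun f b hb => by simp⟩⟩
  add_mem' := by
    rintro d₁ d₂ ⟨hd₁, hw₁⟩ ⟨hd₂, hw₂⟩
    refine ⟨fun f g => ?_, fun B hB hfin => ?_⟩
    · simp only [LinearMap.add_apply, hd₁ f g, hd₂ f g, dmul_add_left, dmul_add_right]
      abel
    · obtain ⟨i₁, hi₁, he₁⟩ := hw₁ B hB hfin
      obtain ⟨i₂, hi₂, he₂⟩ := hw₂ B hB hfin
      exact ⟨i₁ + i₂, Submodule.add_mem _ hi₁ hi₂, fun f b hb => by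
        simp [LinearMap.add_apply, he₁ f b hb, he₂ f b hb]⟩
  smul_mem' := by
    rintro c d ⟨hd, hw⟩
    refine ⟨fun f g => ?_, fun B hB hfin => ?_⟩
    · simp only [LinearMap.smul_apply, hd f g, dmul_smul_left, dmul_smul_right, smul_add]
    · obtain ⟨i, hi, he⟩ := hw B hB hfin
      exact ⟨c • i, Submodule.smul_mem _ c hi, fun f b hb => by
        simp [LinearMap.smul_apply, he f b hb]⟩
/-- Multiplication in the null extension `C = A* ⊕ A`. -/
noncomputable def cmul (Δ : A →ₗ[k] A ⊗[k] A) (x y : (A →ₗ[k] k) × A) :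
    (A →ₗ[k] k) × A :=
  (dmul Δ x.1 y.1, lact Δ x.1 y.2 + lact Δ y.1 x.2)

theorem lact_add_left (Δ : A →ₗ[k] A ⊗[k] A) (f₁ f₂ : (A →ₗ[k] k)) (a : A) :
    lact Δ (f₁ + f₂) a = lact Δ f₁ a + lact Δ f₂ a := by
  simp [lact, TensorProduct.map_add_right]

theorem lact_smul_left (Δ : A →ₗ[k] A ⊗[k] A) (c : k) (f : (A →ₗ[k] k)) (a : A) :
    lact Δ (c • f) a = c • lact Δ f a := by
  simp [lact, TensorProduct.map_smul_right]

/-- Right multiplication by an element of the null extension `C = A* ⊕ A`,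
as a linear operator on `C`. -/
noncomputable def RopC (Δ : A →ₗ[k] A ⊗[k] A) (x : (A →ₗ[k] k) × A) :
    ((A →ₗ[k] k) × A) →ₗ[k] ((A →ₗ[k] k) × A) where
  toFun y := cmul Δ y x
  map_add' y z := by
    simp only [cmul, Prod.fst_add, Prod.snd_add, Prod.mk_add_mk, dmul_add_left,
      lact_add_left, map_add]
    rw [Prod.mk.injEq]
    constructor
    · rfl
    · abel
  map_smul' c y := by
    simp only [cmul, Prod.smul_fst, Prod.smul_snd, Prod.smul_mk, dmul_smul_left,
      lact_smul_left, map_smul, RingHom.id_apply, smul_add]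

/-- The operator `[x,y] = x'y' - y'x'` on the null extension `C`
(right-operator convention: `z[x,y] = (zx)y - (zy)x`). -/
noncomputable def commC (Δ : A →ₗ[k] A ⊗[k] A) (x y : (A →ₗ[k] k) × A) :
    ((A →ₗ[k] k) × A) →ₗ[k] ((A →ₗ[k] k) × A) :=
  RopC Δ y ∘ₗ RopC Δ x - RopC Δ x ∘ₗ RopC Δ y

/-- The mixed commutator operator `[f,a]` on `C`, for `f ∈ A*` and `a ∈ A`. -/
noncomputable def commMixed (Δ : A →ₗ[k] A ⊗[k] A) (f : (A →ₗ[k] k)) (a : A) :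
    ((A →ₗ[k] k) × A) →ₗ[k] ((A →ₗ[k] k) × A) :=
  commC Δ (f, 0) (0, a)

/-- The space `[A*, A]`, spanned by the mixed commutators, inside `End(C)`. -/
noncomputable def CommAA (Δ : A →ₗ[k] A ⊗[k] A) :
    Submodule k (((A →ₗ[k] k) × A) →ₗ[k] ((A →ₗ[k] k) × A)) :=
  Submodule.span k {u | ∃ (f : (A →ₗ[k] k)) (a : A), u = commMixed Δ f a}

/-- The additive group structure of `[A*, A]` (the canonical `Submodule.addCommGroup`,
supplied explicitly since instance search no longer finds it here). -/
noncomputable instance CommAA.addCommGroup (Δ : A →ₗ[k] A ⊗[k] A) :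
    AddCommGroup ↥(CommAA Δ) :=
  @Submodule.addCommGroup k _ _ LinearMap.addCommGroup LinearMap.module (CommAA Δ)

/-- The Kantor–Koecher–Tits bracket on `L(A*) = A* ⊕ (A*)' ⊕ WIntDer(A*) ⊕ Ā*`
(the third component is taken in `End(A*)`; for elements of `L(A*)` it lies in
`WIntDer(A*)`).  An element `(a, g, d, b)` represents `a + g' + d + b̄`. -/
noncomputable def bracketStar (Δ : A →ₗ[k] A ⊗[k] A)
    (l₁ l₂ : (A →ₗ[k] k) × (A →ₗ[k] k) × ((A →ₗ[k] k) →ₗ[k] (A →ₗ[k] k)) × (A →ₗ[k] k)) :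
    (A →ₗ[k] k) × (A →ₗ[k] k) × ((A →ₗ[k] k) →ₗ[k] (A →ₗ[k] k)) × (A →ₗ[k] k) :=
  (dmul Δ l₁.1 l₂.2.1 + l₂.2.2.1 l₁.1 - dmul Δ l₂.1 l₁.2.1 - l₁.2.2.1 l₂.1,
   dmul Δ l₁.1 l₂.2.2.2 - dmul Δ l₂.1 l₁.2.2.2 + l₂.2.2.1 l₁.2.1 - l₁.2.2.1 l₂.2.1,
   - commD Δ l₁.1 l₂.2.2.2 + commD Δ l₂.1 l₁.2.2.2 + commD Δ l₁.2.1 l₂.2.1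
     + (l₂.2.2.1 ∘ₗ l₁.2.2.1 - l₁.2.2.1 ∘ₗ l₂.2.2.1),
   - dmul Δ l₁.2.2.2 l₂.2.1 + l₂.2.2.1 l₁.2.2.2 + dmul Δ l₂.2.2.2 l₁.2.1
     - l₁.2.2.1 l₂.2.2.2)

/-- The involution `ε(a + c' + d + b̄) = b - c' + d + ā` on `L(A*)`. -/
def epsStar
    (l : (A →ₗ[k] k) × (A →ₗ[k] k) × ((A →ₗ[k] k) →ₗ[k] (A →ₗ[k] k)) × (A →ₗ[k] k)) :
    (A →ₗ[k] k) × (A →ₗ[k] k) × ((A →ₗ[k] k) →ₗ[k] (A →ₗ[k] k)) × (A →ₗ[k] k) :=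
  (l.2.2.2, - l.2.1, l.2.2.1, l.1)

/-- The module action `[l, l*]` of `L(A*)` on `L(A) = A ⊕ A' ⊕ [A*,A] ⊕ Ā`.
`Dex d` is the canonical extension of a weakly inner derivation `d` to `A`
(Proposition 2), passed as a parameter.  An element `(a, b, v, c)` of `L(A)`
represents `a + b' + v + c̄`. -/
noncomputable def actLL (Δ : A →ₗ[k] A ⊗[k] A)
    (Dex : ((A →ₗ[k] k) →ₗ[k] (A →ₗ[k] k)) → (A →ₗ[k] A))
    (l : A × A × (((A →ₗ[k] k) × A) →ₗ[k] ((A →ₗ[k] k) × A)) × A)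
    (ls : (A →ₗ[k] k) × (A →ₗ[k] k) × ((A →ₗ[k] k) →ₗ[k] (A →ₗ[k] k)) × (A →ₗ[k] k)) :
    A × A × (((A →ₗ[k] k) × A) →ₗ[k] ((A →ₗ[k] k) × A)) × A :=
  (lact Δ ls.2.1 l.1 + Dex ls.2.2.1 l.1 - lact Δ ls.1 l.2.1 - (l.2.2.1 (ls.1, 0)).2,
   ract Δ ls.2.2.2 l.1 - lact Δ ls.1 l.2.2.2 + Dex ls.2.2.1 l.2.1,
   commMixed Δ ls.2.2.2 l.1 + commMixed Δ ls.1 l.2.2.2 - commMixed Δ ls.2.1 l.2.1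
     + (RopC Δ (ls.2.1, 0) ∘ₗ l.2.2.1 - l.2.2.1 ∘ₗ RopC Δ (ls.2.1, 0))
     + ((LinearMap.prodMap ls.2.2.1 (Dex ls.2.2.1)) ∘ₗ l.2.2.1
        - l.2.2.1 ∘ₗ (LinearMap.prodMap ls.2.2.1 (Dex ls.2.2.1))),
   - lact Δ ls.2.1 l.2.2.2 + Dex ls.2.2.1 l.2.2.2 + lact Δ ls.2.2.2 l.2.1
     - (l.2.2.1 (ls.2.2.2, 0)).2)

/-- The natural pairing between `L(A*)` and `L(A)`, via the identification
`WIntDer(A*) ≅ ([A*,A])*` given by `φ` (Lemma 2). -/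
noncomputable def pairSF (Δ : A →ₗ[k] A ⊗[k] A)
    (φ : ↥(WIntDer Δ) →ₗ[k] (↥(CommAA Δ) →ₗ[k] k))
    (ls : (A →ₗ[k] k) × (A →ₗ[k] k) × ((A →ₗ[k] k) →ₗ[k] (A →ₗ[k] k)) × (A →ₗ[k] k))
    (l : A × A × (((A →ₗ[k] k) × A) →ₗ[k] ((A →ₗ[k] k) × A)) × A)
    (hd : ls.2.2.1 ∈ WIntDer Δ) (hv : l.2.2.1 ∈ CommAA Δ) : k :=
  ls.1 l.1 + ls.2.1 l.2.1 + φ ⟨ls.2.2.1, hd⟩ ⟨l.2.2.1, hv⟩ + ls.2.2.2 l.2.2.2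

/-- The space `L(A) = A ⊕ A' ⊕ [A*,A] ⊕ Ā` underlying the Lie coalgebra of Theorem 1.
An element `(a, b, v, c)` represents `a + b' + v + c̄`. -/
@[reducible] def LKKT (Δ : A →ₗ[k] A ⊗[k] A) : Type _ :=
  A × A × ↥(CommAA Δ) × A

/-- An element of `L(A*) = A* ⊕ (A*)' ⊕ WIntDer(A*) ⊕ Ā*` as a linear functional on
`L(A)`, via the identification `WIntDer(A*) ≅ ([A*,A])*` given by `φ` (Lemma 2). -/
noncomputable def toFunc (Δ : A →ₗ[k] A ⊗[k] A)
    (φ : ↥(WIntDer Δ) →ₗ[k] (↥(CommAA Δ) →ₗ[k] k))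
    (f : (A →ₗ[k] k) × (A →ₗ[k] k) × ((A →ₗ[k] k) →ₗ[k] (A →ₗ[k] k)) × (A →ₗ[k] k))
    (hf : f.2.2.1 ∈ WIntDer Δ) : LKKT Δ →ₗ[k] k :=
  f.1 ∘ₗ LinearMap.fst k A (A × (↥(CommAA Δ) × A)) +
  f.2.1 ∘ₗ (LinearMap.fst k A (↥(CommAA Δ) × A)
      ∘ₗ LinearMap.snd k A (A × (↥(CommAA Δ) × A))) +
  (φ ⟨f.2.2.1, hf⟩) ∘ₗ (LinearMap.fst k ↥(CommAA Δ) A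
      ∘ₗ LinearMap.snd k A (↥(CommAA Δ) × A)
      ∘ₗ LinearMap.snd k A (A × (↥(CommAA Δ) × A))) +
  f.2.2.2 ∘ₗ (LinearMap.snd k ↥(CommAA Δ) A
      ∘ₗ LinearMap.snd k A (↥(CommAA Δ) × A)
      ∘ₗ LinearMap.snd k A (A × (↥(CommAA Δ) × A)))

/-- The standard embedding `ρ` on a pair of functionals: `ρ(F ⊗ G)` as a functional
on `M ⊗ M`. -/
noncomputable def pairT {M : Type*} [AddCommGroup M] [Module k M]
    (F G : M →ₗ[k] k) : (M ⊗[k] M) →ₗ[k] k :=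
  (TensorProduct.lid k k).toLinearMap ∘ₗ TensorProduct.map F G

/-- The map `π(a + b' + v + c̄) = c - b' + v + ā` on `L(A)`. -/
def piL (Δ : A →ₗ[k] A ⊗[k] A) (l : LKKT Δ) : LKKT Δ :=
  (l.2.2.2, - l.2.1, l.2.2.1, l.1)

/-- The natural inclusion `A → L(A)`. -/
noncomputable def inclA (Δ : A →ₗ[k] A ⊗[k] A) : A →ₗ[k] LKKT Δ :=
  LinearMap.prod LinearMap.id (LinearMap.prod 0 (LinearMap.prod 0 0))

/-- The subspace `d*(V) = {v ∈ [A*,A] | V^⊥ · v ⊆ V}` of `[A*,A]`. -/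
noncomputable def dstarSub (Δ : A →ₗ[k] A ⊗[k] A) (V : Submodule k A) :
    Submodule k ↥(CommAA Δ) where
  carrier := {w | ∀ f ∈ V.dualAnnihilator,
    (((w : ((A →ₗ[k] k) × A) →ₗ[k] ((A →ₗ[k] k) × A))) (f, 0)).2 ∈ V}
  zero_mem' := by intro f hf; simp
  add_mem' := by
    intro w₁ w₂ h₁ h₂ f hf
    simp only [Submodule.coe_add, LinearMap.add_apply, Prod.snd_add]
    exact V.add_mem (h₁ f hf) (h₂ f hf)
  smul_mem' := by
    intro c w h f hf
    simp only [SetLike.val_smul, LinearMap.smul_apply, Prod.smul_snd]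
    exact V.smul_mem c (h f hf)

/-- The coideal `L₁*(V) = V ⊕ V' ⊕ [V^⊥, V] ⊕ V̄` of `⟨L(A), Δ_L⟩`. -/
noncomputable def L1star (Δ : A →ₗ[k] A ⊗[k] A) (V : Submodule k A) :
    Submodule k (LKKT Δ) :=
  V.prod (V.prod ((Submodule.comap (CommAA Δ).subtype
    (Submodule.span k {u | ∃ f ∈ V.dualAnnihilator, ∃ x ∈ V, u = commMixed Δ f x})).prod V))

/-- The coideal `L₂*(V) = V ⊕ V' ⊕ d*(V) ⊕ V̄` of `⟨L(A), Δ_L⟩`. -/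
noncomputable def L2star (Δ : A →ₗ[k] A ⊗[k] A) (V : Submodule k A) :
    Submodule k (LKKT Δ) :=
  V.prod (V.prod ((dstarSub Δ V).prod V))

/-!
Since `L` is a coideal, it is stable under the coaction of every `u ∈ L(A*)` annihilating it:
the element `l·u` with `⟨F, l·u⟩ = ⟨[F, u], l⟩` is the contraction of `Δ_L l` with `u`, which
stays in `L`. The elements `1, (1)', 1̄` of `U` annihilate `L`, and their coactions together
with `π` carry every component of every `l ∈ L` into the copy of `A`; projecting `Δ_L` onto
`A ⊗ A'` then exhibits `Δ` and shows that `V` is a coideal. For `f ∈ V^⊥`, `f` itself annihilates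
`L`; its coaction on `a + b' + v + c̄` has last component `((f, 0)v)_A - b·f`, which gives
`v ∈ d*(V)`, and its coaction on `a ∈ V` gives `[f, a] ∈ L`. The Jordan identity is used only
to know that each `[f, g]` is a derivation, so that these brackets stay inside `L(A*)`.
-/

section TensorSlices

variable {M N : Type*} [AddCommGroup M] [Module k M] [AddCommGroup N] [Module k N]

noncomputable def sliceRight (G : N →ₗ[k] k) : M ⊗[k] N →ₗ[k] M :=
  (TensorProduct.rid k M).toLinearMap ∘ₗ TensorProduct.map LinearMap.id G

noncomputable def sliceLeft (F : M →ₗ[k] k) : M ⊗[k] N →ₗ[k] N :=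
  (TensorProduct.lid k N).toLinearMap ∘ₗ TensorProduct.map F LinearMap.id

@[simp] theorem sliceRight_tmul (G : N →ₗ[k] k) (x : M) (y : N) :
    sliceRight G (x ⊗ₜ[k] y) = G y • x := by
  simp [sliceRight]

@[simp] theorem sliceLeft_tmul (F : M →ₗ[k] k) (x : M) (y : N) :
    sliceLeft F (x ⊗ₜ[k] y) = F x • y := by
  simp [sliceLeft]

@[simp] theorem pairT_tmul (F G : M →ₗ[k] k) (x y : M) :
    pairT F G (x ⊗ₜ[k] y) = F x * G y := by
  simp [pairT]

theorem pairT_eq_apply_sliceRight (F G : M →ₗ[k] k) (t : M ⊗[k] M) :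
    pairT F G t = F (sliceRight G t) := by
  induction t with
  | zero => simp
  | tmul x y => simp [mul_comm]
  | add x y hx hy => simp only [map_add, hx, hy]

theorem pairT_eq_apply_sliceLeft (F G : M →ₗ[k] k) (t : M ⊗[k] M) :
    pairT F G t = G (sliceLeft F t) := by
  induction t with
  | zero => simp
  | tmul x y => simp
  | add x y hx hy => simp only [map_add, hx, hy]

theorem pairT_map {M' : Type*} [AddCommGroup M'] [Module k M'] (F G : M →ₗ[k] k)
    (P Q : M' →ₗ[k] M) (t : M' ⊗[k] M') :
    pairT F G (TensorProduct.map P Q t) = pairT (F ∘ₗ P) (G ∘ₗ Q) t := by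
  simp only [pairT, LinearMap.comp_apply, TensorProduct.map_map]

/-- The coordinate functionals of a tensor-product basis are of the form `F ⊗ G`. -/
theorem TensorProduct.ext_pairT {t s : M ⊗[k] M}
    (h : ∀ F G : M →ₗ[k] k, pairT F G t = pairT F G s) : t = s := by
  classical
  let b := Module.Basis.ofVectorSpace k M
  have hcoord : ∀ (i j) (u : M ⊗[k] M),
      (b.tensorProduct b).repr u (i, j) = pairT (b.coord i) (b.coord j) u := by
    intro i j u
    induction u with
    | zero => simp
    | tmul x y => simp [Module.Basis.tensorProduct_repr_tmul_apply, mul_comm]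
    | add x y hx hy => simp only [map_add, Finsupp.add_apply, hx, hy]
  apply (b.tensorProduct b).repr.injective
  ext ⟨i, j⟩
  rw [hcoord, hcoord, h]

theorem range_map_subtype_left_le {P Q : M →ₗ[k] N} {S : Submodule k M} {V : Submodule k N}
    (hP : ∀ x ∈ S, P x ∈ V) :
    (LinearMap.range (TensorProduct.map S.subtype LinearMap.id)).map (TensorProduct.map P Q) ≤
      LinearMap.range (TensorProduct.map V.subtype (LinearMap.id (R := k) (M := N))) := by
  have hfactor : P ∘ₗ S.subtype = V.subtype ∘ₗ P.restrict hP := rfl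
  rw [← LinearMap.range_comp, ← TensorProduct.map_comp, hfactor, ← LinearMap.id_comp Q,
    LinearMap.comp_id, TensorProduct.map_comp]
  exact LinearMap.range_comp_le_range _ _

theorem range_map_subtype_right_le {P Q : M →ₗ[k] N} {S : Submodule k M} {V : Submodule k N}
    (hQ : ∀ x ∈ S, Q x ∈ V) :
    (LinearMap.range (TensorProduct.map LinearMap.id S.subtype)).map (TensorProduct.map P Q) ≤
      LinearMap.range (TensorProduct.map (LinearMap.id (R := k) (M := N)) V.subtype) := by
  have hfactor : Q ∘ₗ S.subtype = V.subtype ∘ₗ Q.restrict hQ := rfl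
  rw [← LinearMap.range_comp, ← TensorProduct.map_comp, hfactor, ← LinearMap.id_comp P,
    LinearMap.comp_id, TensorProduct.map_comp]
  exact LinearMap.range_comp_le_range _ _

theorem IsCoideal.comap {ΔM : M →ₗ[k] M ⊗[k] M} {ΔN : N →ₗ[k] N ⊗[k] N} {S : Submodule k M}
    (hS : IsCoideal ΔM S) (i : N →ₗ[k] M) (P Q : M →ₗ[k] N)
    (hP : ∀ x ∈ S, P x ∈ S.comap i) (hQ : ∀ x ∈ S, Q x ∈ S.comap i)
    (hcomul : ∀ a, TensorProduct.map P Q (ΔM (i a)) = ΔN a) : IsCoideal ΔN (S.comap i) := by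
  intro a ha
  rw [← hcomul]
  refine (Submodule.map_sup _ _ _).trans_le (sup_le_sup ?_ ?_) (Submodule.mem_map_of_mem (hS _ ha))
  · exact range_map_subtype_left_le hP
  · exact range_map_subtype_right_le hQ

theorem IsCoideal.sliceRight_mem {Δ : M →ₗ[k] M ⊗[k] M} {S : Submodule k M} (hS : IsCoideal Δ S)
    {G : M →ₗ[k] k} (hG : ∀ x ∈ S, G x = 0) {b : M} (hb : b ∈ S) : sliceRight G (Δ b) ∈ S := by
  have h₁ : ∀ s : S ⊗[k] M, sliceRight G (TensorProduct.map S.subtype LinearMap.id s) ∈ S := by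
    intro s
    induction s with
    | zero => simp
    | tmul x y => simpa using S.smul_mem (G y) x.2
    | add x y hx hy => rw [map_add, map_add]; exact S.add_mem hx hy
  have h₂ : ∀ s : M ⊗[k] S, sliceRight G (TensorProduct.map LinearMap.id S.subtype s) = 0 := by
    intro s
    induction s with
    | zero => simp
    | tmul x y => simp [hG y y.2]
    | add x y hx hy => rw [map_add, map_add, hx, hy, add_zero]
  obtain ⟨_, ⟨s₁, rfl⟩, _, ⟨s₂, rfl⟩, hsum⟩ := Submodule.mem_sup.mp (hS b hb)
  rw [← hsum, map_add, h₂, add_zero]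
  exact h₁ s₁

theorem IsCoideal.sliceLeft_mem {Δ : M →ₗ[k] M ⊗[k] M} {S : Submodule k M} (hS : IsCoideal Δ S)
    {F : M →ₗ[k] k} (hF : ∀ x ∈ S, F x = 0) {b : M} (hb : b ∈ S) : sliceLeft F (Δ b) ∈ S := by
  have h₁ : ∀ s : S ⊗[k] M, sliceLeft F (TensorProduct.map S.subtype LinearMap.id s) = 0 := by
    intro s
    induction s with
    | zero => simp
    | tmul x y => simp [hF x x.2]
    | add x y hx hy => rw [map_add, map_add, hx, hy, add_zero]
  have h₂ : ∀ s : M ⊗[k] S, sliceLeft F (TensorProduct.map LinearMap.id S.subtype s) ∈ S := by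
    intro s
    induction s with
    | zero => simp
    | tmul x y => simpa using S.smul_mem (F x) y.2
    | add x y hx hy => rw [map_add, map_add]; exact S.add_mem hx hy
  obtain ⟨_, ⟨s₁, rfl⟩, _, ⟨s₂, rfl⟩, hsum⟩ := Submodule.mem_sup.mp (hS b hb)
  rw [← hsum, map_add, h₁, zero_add]
  exact h₂ s₂

end TensorSlices

theorem LinearMap.sum_perm_eq_zero_of_apply_self {V W : Type*} [AddCommGroup V] [Module k V]
    [AddCommGroup W] [Module k W] (h2 : (2 : k) ≠ 0) (T : V →ₗ[k] V →ₗ[k] V →ₗ[k] W)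
    (hT : ∀ u, T u u u = 0) (x y z : V) :
    T x y z + T x z y + T y x z + T y z x + T z x y + T z y x = 0 := by
  have cancel_two : ∀ e : W, (2 : k) • e = 0 → e = 0 := fun e he =>
    (smul_eq_zero.mp he).resolve_left h2
  have polar₁ : ∀ x z, T x x z + T x z x + T z x x = 0 := by
    intro x z
    refine cancel_two _ ?_
    have expand : (2 : k) • (T x x z + T x z x + T z x x) =
        T (x + z) (x + z) (x + z) - T (x - z) (x - z) (x - z) - (2 : k) • T z z z := by
      simp only [map_add, map_sub, LinearMap.add_apply, LinearMap.sub_apply]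
      module
    rw [expand, hT, hT, hT, smul_zero, sub_zero, sub_zero]
  refine cancel_two _ ?_
  have expand : (2 : k) • (T x y z + T x z y + T y x z + T y z x + T z x y + T z y x) =
      (T (x + y) (x + y) z + T (x + y) z (x + y) + T z (x + y) (x + y)) -
        (T (x - y) (x - y) z + T (x - y) z (x - y) + T z (x - y) (x - y)) := by
    simp only [map_add, map_sub, LinearMap.add_apply, LinearMap.sub_apply]
    module
  rw [expand, polar₁, polar₁, sub_zero]

section DualAlgebra

variable (Δ : A →ₗ[k] A ⊗[k] A)

noncomputable def dmulₗ : (A →ₗ[k] k) →ₗ[k] (A →ₗ[k] k) →ₗ[k] (A →ₗ[k] k) :=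
  LinearMap.mk₂ k (dmul Δ) (dmul_add_left Δ) (dmul_smul_left Δ) (dmul_add_right Δ)
    (dmul_smul_right Δ)

theorem dmul_sub_left (f₁ f₂ g : A →ₗ[k] k) :
    dmul Δ (f₁ - f₂) g = dmul Δ f₁ g - dmul Δ f₂ g :=
  LinearMap.map_sub₂ (dmulₗ Δ) f₁ f₂ g

theorem dmul_sub_right (f g₁ g₂ : A →ₗ[k] k) :
    dmul Δ f (g₁ - g₂) = dmul Δ f g₁ - dmul Δ f g₂ :=
  map_sub (dmulₗ Δ f) g₁ g₂

/-- The Jordan identity says exactly that this trilinear map vanishes on the diagonal. -/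
noncomputable def jordanAssoc (y : A →ₗ[k] k) :
    (A →ₗ[k] k) →ₗ[k] (A →ₗ[k] k) →ₗ[k] (A →ₗ[k] k) →ₗ[k] (A →ₗ[k] k) :=
  LinearMap.mk₂ k (fun u v => dmulₗ Δ (dmul Δ (dmul Δ u v) y) - dmulₗ Δ (dmul Δ u v) ∘ₗ dmulₗ Δ y)
    (fun _ _ _ => by ext; simp [dmul_add_left]; abel)
    (fun _ _ _ => by ext; simp [dmul_smul_left, smul_sub])
    (fun _ _ _ => by ext; simp [dmul_add_right, dmul_add_left]; abel)
    (fun _ _ _ => by ext; simp [dmul_smul_right, dmul_smul_left, smul_sub])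

theorem jordanAssoc_apply (y u v s : A →ₗ[k] k) :
    jordanAssoc Δ y u v s = dmul Δ (dmul Δ (dmul Δ u v) y) s - dmul Δ (dmul Δ u v) (dmul Δ y s) :=
  rfl

variable {Δ}

theorem dmul_jordan_linearized (h2 : (2 : k) ≠ 0) (hJ : IsJordanCoalgebra Δ)
    (x w z y : A →ₗ[k] k) :
    dmul Δ (dmul Δ (dmul Δ x w) y) z + dmul Δ (dmul Δ (dmul Δ x z) y) w
      + dmul Δ (dmul Δ (dmul Δ w z) y) x
    = dmul Δ (dmul Δ x w) (dmul Δ y z) + dmul Δ (dmul Δ x z) (dmul Δ y w)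
      + dmul Δ (dmul Δ w z) (dmul Δ y x) := by
  have hsym := LinearMap.sum_perm_eq_zero_of_apply_self h2 (jordanAssoc Δ y)
    (fun u => by rw [jordanAssoc_apply, sub_eq_zero, hJ.2]) x w z
  simp only [jordanAssoc_apply, hJ.1 w x, hJ.1 z x, hJ.1 z w] at hsym
  rw [← sub_eq_zero]
  refine (smul_eq_zero.mp ?_).resolve_left h2
  rw [← hsym]
  module

theorem commD_apply (f g x : A →ₗ[k] k) :
    commD Δ f g x = dmul Δ (dmul Δ x f) g - dmul Δ (dmul Δ x g) f := rfl

theorem commD_isDerivation (h2 : (2 : k) ≠ 0) (hJ : IsJordanCoalgebra Δ) (a b : A →ₗ[k] k) :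
    IsDerivation Δ (commD Δ a b) := by
  intro x y
  have hA := dmul_jordan_linearized h2 hJ x y b a
  have hB := dmul_jordan_linearized h2 hJ x y a b
  simp only [commD_apply, dmul_sub_left, dmul_sub_right]
  simp only [hJ.1] at hA hB ⊢
  linear_combination (norm := abel) hA - hB

theorem commD_mem_WIntDer (h2 : (2 : k) ≠ 0) (hJ : IsJordanCoalgebra Δ) (f g : A →ₗ[k] k) :
    commD Δ f g ∈ WIntDer Δ :=
  ⟨commD_isDerivation h2 hJ f g,
    fun _ _ _ => ⟨commD Δ f g, Submodule.subset_span ⟨f, g, rfl⟩, fun _ _ _ => rfl⟩⟩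

end DualAlgebra

section InnerDerivations

variable {Δ : A →ₗ[k] A ⊗[k] A}

theorem commD_zero_left (g : A →ₗ[k] k) : commD Δ 0 g = 0 := by
  ext f a; simp [commD_apply, dmul_zero_left, dmul_zero_right]

theorem commD_zero_right (f : A →ₗ[k] k) : commD Δ f 0 = 0 := by
  ext g a; simp [commD_apply, dmul_zero_left, dmul_zero_right]

theorem commD_one_left {one : A →ₗ[k] k} (hone : ∀ f, dmul Δ one f = f ∧ dmul Δ f one = f)
    (g : A →ₗ[k] k) : commD Δ one g = 0 := by
  ext f a; simp [commD_apply, (hone _).2]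

theorem commD_one_right {one : A →ₗ[k] k} (hone : ∀ f, dmul Δ one f = f ∧ dmul Δ f one = f)
    (f : A →ₗ[k] k) : commD Δ f one = 0 := by
  ext g a; simp [commD_apply, (hone _).2]

theorem map_one_of_mem_WIntDer {one : A →ₗ[k] k}
    (hone : ∀ f, dmul Δ one f = f ∧ dmul Δ f one = f) {d : (A →ₗ[k] k) →ₗ[k] (A →ₗ[k] k)}
    (hd : d ∈ WIntDer Δ) : d one = 0 := by
  have h := (hd : IsWIntDer Δ d).1 one one
  rwa [(hone one).1, (hone (d one)).2, (hone (d one)).1, right_eq_add] at h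

end InnerDerivations

section Actions

variable (Δ : A →ₗ[k] A ⊗[k] A)

theorem dmul_apply_eq_apply_ract (f g : A →ₗ[k] k) (a : A) : dmul Δ f g a = g (ract Δ f a) :=
  pairT_eq_apply_sliceLeft f g (Δ a)

theorem apply_lact (g h : A →ₗ[k] k) (a : A) : g (lact Δ h a) = dmul Δ g h a :=
  (pairT_eq_apply_sliceRight g h (Δ a)).symm

theorem commMixed_apply_inl (f' : A →ₗ[k] k) (a' : A) (f : A →ₗ[k] k) :
    commMixed Δ f' a' (f, 0) = (0, lact Δ (dmul Δ f f') a' - lact Δ f' (lact Δ f a')) := by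
  simp [commMixed, commC, RopC, cmul, dmul_zero_left, dmul_zero_right]

theorem commMixed_mem_CommAA (f : A →ₗ[k] k) (a : A) : commMixed Δ f a ∈ CommAA Δ :=
  Submodule.subset_span ⟨f, a, rfl⟩

variable {Δ}

theorem ract_mem_of_isCoideal {V : Submodule k A} (hV : IsCoideal Δ V) {f : A →ₗ[k] k}
    (hf : f ∈ V.dualAnnihilator) {b : A} (hb : b ∈ V) : ract Δ f b ∈ V :=
  hV.sliceLeft_mem (fun x hx => (Submodule.mem_dualAnnihilator f).mp hf x hx) hb

/-- The identification `WIntDer(A*) ≅ [A*, A]*` of Lemma 2: `⟨d, [f, a]⟩ = (d f)(a)`. -/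
def IsCommMixedPairing (Δ : A →ₗ[k] A ⊗[k] A) (φ : ↥(WIntDer Δ) →ₗ[k] (↥(CommAA Δ) →ₗ[k] k)) :
    Prop :=
  ∀ (e : ↥(WIntDer Δ)) (f : A →ₗ[k] k) (a : A) (h : commMixed Δ f a ∈ CommAA Δ),
    φ e ⟨commMixed Δ f a, h⟩ = (e : ((A →ₗ[k] k) →ₗ[k] (A →ₗ[k] k))) f a

theorem phi_commD {φ : ↥(WIntDer Δ) →ₗ[k] (↥(CommAA Δ) →ₗ[k] k)} (hφ : IsCommMixedPairing Δ φ)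
    (hcomm : ∀ f g : A →ₗ[k] k, dmul Δ f g = dmul Δ g f) (f g : A →ₗ[k] k)
    (hd : commD Δ f g ∈ WIntDer Δ) (w : ↥(CommAA Δ)) :
    φ ⟨commD Δ f g, hd⟩ w = g (((w : ((A →ₗ[k] k) × A) →ₗ[k] ((A →ₗ[k] k) × A)) (f, 0)).2) := by
  obtain ⟨w, hw⟩ := w
  have hw' : w ∈ Submodule.span k {u | ∃ (f : A →ₗ[k] k) (a : A), u = commMixed Δ f a} := hw
  induction hw' using Submodule.span_induction with
  | mem x hx =>
      obtain ⟨f', a', rfl⟩ := hx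
      rw [hφ ⟨commD Δ f g, hd⟩ f' a', commMixed_apply_inl, commD_apply]
      simp only [map_sub, apply_lact, LinearMap.sub_apply, hcomm f' g, hcomm f' f,
        hcomm (dmul Δ f f') g]
  | zero => simp [show (⟨0, _⟩ : ↥(CommAA Δ)) = 0 from rfl]
  | add x y hx hy ihx ihy =>
      simp [show (⟨x + y, _⟩ : ↥(CommAA Δ)) = ⟨x, hx⟩ + ⟨y, hy⟩ from rfl, ihx hx, ihy hy]
  | smul c x hx ih =>
      simp [show (⟨c • x, _⟩ : ↥(CommAA Δ)) = c • ⟨x, hx⟩ from rfl, ih hx]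

end Actions

variable (k A) in
/-- `L(A*)`, with the derivation component taken in all of `End(A*)` as in `bracketStar`. -/
abbrev LKKTDual : Type _ :=
  (A →ₗ[k] k) × (A →ₗ[k] k) × ((A →ₗ[k] k) →ₗ[k] (A →ₗ[k] k)) × (A →ₗ[k] k)

/-- The characterization `⟨[f, g], l⟩ = ⟨f ⊗ g, Δ_L l⟩` of the comultiplication of Theorem 1. -/
def IsBracketDual (Δ : A →ₗ[k] A ⊗[k] A) (φ : ↥(WIntDer Δ) →ₗ[k] (↥(CommAA Δ) →ₗ[k] k))
    (ΔL : LKKT Δ →ₗ[k] (LKKT Δ ⊗[k] LKKT Δ)) : Prop :=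
  ∀ (f g : LKKTDual k A) (hf : f.2.2.1 ∈ WIntDer Δ) (hg : g.2.2.1 ∈ WIntDer Δ)
    (hbr : (bracketStar Δ f g).2.2.1 ∈ WIntDer Δ) (l : LKKT Δ),
    toFunc Δ φ (bracketStar Δ f g) hbr l = pairT (toFunc Δ φ f hf) (toFunc Δ φ g hg) (ΔL l)

section Pairing

variable {Δ : A →ₗ[k] A ⊗[k] A} {φ : ↥(WIntDer Δ) →ₗ[k] (↥(CommAA Δ) →ₗ[k] k)}

theorem toFunc_apply (F : LKKTDual k A) (hF : F.2.2.1 ∈ WIntDer Δ) (l : LKKT Δ) :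
    toFunc Δ φ F hF l = F.1 l.1 + F.2.1 l.2.1 + φ ⟨F.2.2.1, hF⟩ l.2.2.1 + F.2.2.2 l.2.2.2 :=
  rfl

@[simp] theorem phi_mk_zero (h : (0 : (A →ₗ[k] k) →ₗ[k] (A →ₗ[k] k)) ∈ WIntDer Δ) :
    φ ⟨0, h⟩ = 0 :=
  map_zero φ

theorem toFunc_congr {F G : LKKTDual k A} (h : F = G) (hF : F.2.2.1 ∈ WIntDer Δ)
    (hG : G.2.2.1 ∈ WIntDer Δ) (l : LKKT Δ) : toFunc Δ φ F hF l = toFunc Δ φ G hG l := by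
  subst h; rfl

theorem LKKT.ext_toFunc (hφ : Function.Surjective φ) {x y : LKKT Δ}
    (h : ∀ (F : LKKTDual k A) (hF : F.2.2.1 ∈ WIntDer Δ),
      toFunc Δ φ F hF x = toFunc Δ φ F hF y) :
    x = y := by
  have h0 := (WIntDer Δ).zero_mem
  refine Prod.ext ?_ (Prod.ext ?_ (Prod.ext ?_ ?_)) <;>
    refine Module.eval_apply_injective k (LinearMap.ext fun ψ => ?_)
  · simpa [toFunc_apply] using h (ψ, 0, 0, 0) h0
  · simpa [toFunc_apply] using h (0, ψ, 0, 0) h0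
  · obtain ⟨e, rfl⟩ := hφ ψ
    simpa [toFunc_apply] using h (0, 0, e, 0) e.2
  · simpa [toFunc_apply] using h (0, 0, 0, ψ) h0

/-- A coideal is stable under the coaction `l ↦ T`, `⟨F, T⟩ = ⟨[F, u], l⟩`, of any `u`
annihilating it; `B F` is `[F, u]` in closed form. -/
theorem IsBracketDual.mem_of_annihilator {ΔL : LKKT Δ →ₗ[k] (LKKT Δ ⊗[k] LKKT Δ)}
    {L : Submodule k (LKKT Δ)} (hφ : Function.Surjective φ) (hΔL : IsBracketDual Δ φ ΔL)
    (hL : IsCoideal ΔL L) {u : LKKTDual k A} (hu : u.2.2.1 ∈ WIntDer Δ)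
    (hu_ann : ∀ l ∈ L, toFunc Δ φ u hu l = 0) (B : LKKTDual k A → LKKTDual k A)
    (hB : ∀ F, F.2.2.1 ∈ WIntDer Δ → bracketStar Δ F u = B F)
    (hBW : ∀ F, F.2.2.1 ∈ WIntDer Δ → (B F).2.2.1 ∈ WIntDer Δ)
    {l T : LKKT Δ} (hl : l ∈ L)
    (hT : ∀ F (hF : F.2.2.1 ∈ WIntDer Δ), toFunc Δ φ (B F) (hBW F hF) l = toFunc Δ φ F hF T) :
    T ∈ L := by
  have hcoact : sliceRight (toFunc Δ φ u hu) (ΔL l) = T := by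
    refine LKKT.ext_toFunc hφ fun F hF => ?_
    have hbr : (bracketStar Δ F u).2.2.1 ∈ WIntDer Δ := hB F hF ▸ hBW F hF
    rw [← hT F hF, ← pairT_eq_apply_sliceRight, ← hΔL F u hF hu hbr]
    exact toFunc_congr (hB F hF) hbr (hBW F hF) l
  exact hcoact ▸ hL.sliceRight_mem hu_ann hl

end Pairing

section Brackets

variable {Δ : A →ₗ[k] A ⊗[k] A} {one : A →ₗ[k] k}

theorem bracketStar_one (hone : ∀ f, dmul Δ one f = f ∧ dmul Δ f one = f) (F : LKKTDual k A)
    (hF : F.2.2.1 one = 0) : bracketStar Δ F (one, 0, 0, 0) = (-F.2.1, -F.2.2.2, 0, 0) := by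
  ext <;> simp [bracketStar, hF, (hone _).1, dmul_zero_left, dmul_zero_right, commD_one_left hone,
    commD_zero_right]

theorem bracketStar_oneOp (hone : ∀ f, dmul Δ one f = f ∧ dmul Δ f one = f) (F : LKKTDual k A)
    (hF : F.2.2.1 one = 0) : bracketStar Δ F (0, one, 0, 0) = (F.1, 0, 0, -F.2.2.2) := by
  ext <;> simp [bracketStar, hF, (hone _).2, dmul_zero_left, dmul_zero_right, commD_one_right hone,
    commD_zero_left, commD_zero_right]

theorem bracketStar_oneBar (hone : ∀ f, dmul Δ one f = f ∧ dmul Δ f one = f) (F : LKKTDual k A)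
    (hF : F.2.2.1 one = 0) : bracketStar Δ F (0, 0, 0, one) = (0, F.1, 0, F.2.1) := by
  ext <;> simp [bracketStar, hF, (hone _).1, (hone _).2, dmul_zero_left, dmul_zero_right,
    commD_one_right hone, commD_zero_left, commD_zero_right]

theorem bracketStar_inl (f : A →ₗ[k] k) (F : LKKTDual k A) :
    bracketStar Δ F (f, 0, 0, 0) =
      (-dmul Δ f F.2.1 - F.2.2.1 f, -dmul Δ f F.2.2.2, commD Δ f F.2.2.2, 0) := by
  ext <;> simp [bracketStar, dmul_zero_left, dmul_zero_right, commD_zero_right, sub_eq_add_neg]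

theorem bracketStar_inl_oneOp (f g : A →ₗ[k] k) :
    bracketStar Δ (f, 0, 0, 0) (0, g, 0, 0) = (dmul Δ f g, 0, 0, 0) := by
  ext <;> simp [bracketStar, dmul_zero_left, dmul_zero_right, commD_zero_left, commD_zero_right]

end Brackets

section Coaction

variable {Δ : A →ₗ[k] A ⊗[k] A} {φ : ↥(WIntDer Δ) →ₗ[k] (↥(CommAA Δ) →ₗ[k] k)}
  {ΔL : LKKT Δ →ₗ[k] (LKKT Δ ⊗[k] LKKT Δ)} {L : Submodule k (LKKT Δ)} {one : A →ₗ[k] k}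
  {l : LKKT Δ}

theorem IsBracketDual.coact_one_mem (hφ : Function.Surjective φ) (hΔL : IsBracketDual Δ φ ΔL)
    (hL : IsCoideal ΔL L) (hone : ∀ f, dmul Δ one f = f ∧ dmul Δ f one = f)
    (hann : ∀ l ∈ L, one l.1 = 0) (hl : l ∈ L) : ((0, -l.1, 0, -l.2.1) : LKKT Δ) ∈ L :=
  hΔL.mem_of_annihilator hφ hL (WIntDer Δ).zero_mem
    (fun l hl => by simpa [toFunc_apply] using hann l hl) _
    (fun F hF => bracketStar_one hone F (map_one_of_mem_WIntDer hone hF))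
    (fun _ _ => (WIntDer Δ).zero_mem) hl (fun _ _ => by simp [toFunc_apply])

theorem IsBracketDual.coact_oneOp_mem (hφ : Function.Surjective φ) (hΔL : IsBracketDual Δ φ ΔL)
    (hL : IsCoideal ΔL L) (hone : ∀ f, dmul Δ one f = f ∧ dmul Δ f one = f)
    (hann : ∀ l ∈ L, one l.2.1 = 0) (hl : l ∈ L) : ((l.1, 0, 0, -l.2.2.2) : LKKT Δ) ∈ L :=
  hΔL.mem_of_annihilator hφ hL (WIntDer Δ).zero_mem
    (fun l hl => by simpa [toFunc_apply] using hann l hl) _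
    (fun F hF => bracketStar_oneOp hone F (map_one_of_mem_WIntDer hone hF))
    (fun _ _ => (WIntDer Δ).zero_mem) hl (fun _ _ => by simp [toFunc_apply])

theorem IsBracketDual.coact_oneBar_mem (hφ : Function.Surjective φ) (hΔL : IsBracketDual Δ φ ΔL)
    (hL : IsCoideal ΔL L) (hone : ∀ f, dmul Δ one f = f ∧ dmul Δ f one = f)
    (hann : ∀ l ∈ L, one l.2.2.2 = 0) (hl : l ∈ L) : ((l.2.1, l.2.2.2, 0, 0) : LKKT Δ) ∈ L :=
  hΔL.mem_of_annihilator hφ hL (WIntDer Δ).zero_mem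
    (fun l hl => by simpa [toFunc_apply] using hann l hl) _
    (fun F hF => bracketStar_oneBar hone F (map_one_of_mem_WIntDer hone hF))
    (fun _ _ => (WIntDer Δ).zero_mem) hl (fun _ _ => by simp [toFunc_apply])

theorem IsBracketDual.coact_inl_mem (h2 : (2 : k) ≠ 0) (hJ : IsJordanCoalgebra Δ)
    (hφ : IsCommMixedPairing Δ φ)
    (hφsurj : Function.Surjective φ) (hΔL : IsBracketDual Δ φ ΔL) (hL : IsCoideal ΔL L)
    {f : A →ₗ[k] k} (hann : ∀ l ∈ L, f l.1 = 0) (hl : l ∈ L) :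
    ((0, -ract Δ f l.1, -⟨commMixed Δ f l.1, commMixed_mem_CommAA Δ f l.1⟩,
      ((l.2.2.1 : ((A →ₗ[k] k) × A) →ₗ[k] ((A →ₗ[k] k) × A)) (f, 0)).2 - ract Δ f l.2.1) :
        LKKT Δ) ∈ L := by
  refine hΔL.mem_of_annihilator hφsurj hL (WIntDer Δ).zero_mem
    (fun l hl => by simpa [toFunc_apply] using hann l hl) _
    (fun F _ => bracketStar_inl f F) (fun F _ => commD_mem_WIntDer h2 hJ f F.2.2.2) hl ?_
  rintro ⟨f₁, f₂, d, f₄⟩ hd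
  have hφd : φ ⟨d, hd⟩ ⟨commMixed Δ f l.1, commMixed_mem_CommAA Δ f l.1⟩ = d f l.1 := hφ _ _ _ _
  simp only [toFunc_apply, phi_commD hφ hJ.1, map_neg, hφd, dmul_apply_eq_apply_ract,
    LinearMap.sub_apply, LinearMap.neg_apply, LinearMap.zero_apply, map_sub, map_zero]
  ring

end Coaction

@[simp] theorem inclA_apply {Δ : A →ₗ[k] A ⊗[k] A} (a : A) : inclA Δ a = (a, 0, 0, 0) := rfl

theorem mem_comap_inclA {Δ : A →ₗ[k] A ⊗[k] A} {L : Submodule k (LKKT Δ)} {a : A} :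
    a ∈ L.comap (inclA Δ) ↔ ((a, 0, 0, 0) : LKKT Δ) ∈ L :=
  Iff.rfl

section ComapInclA

variable {Δ : A →ₗ[k] A ⊗[k] A} {φ : ↥(WIntDer Δ) →ₗ[k] (↥(CommAA Δ) →ₗ[k] k)}
  {ΔL : LKKT Δ →ₗ[k] (LKKT Δ ⊗[k] LKKT Δ)} {L : Submodule k (LKKT Δ)} {one : A →ₗ[k] k}

theorem IsBracketDual.components_mem (hφ : Function.Surjective φ) (hΔL : IsBracketDual Δ φ ΔL)
    (hL : IsCoideal ΔL L) (hone : ∀ f, dmul Δ one f = f ∧ dmul Δ f one = f)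
    (hLpi : ∀ l ∈ L, piL Δ l ∈ L)
    (hLU : ∀ l : LKKT Δ, l ∈ L → one l.1 = 0 ∧ one l.2.1 = 0 ∧ one l.2.2.2 = 0)
    {l : LKKT Δ} (hl : l ∈ L) :
    l.1 ∈ L.comap (inclA Δ) ∧ l.2.1 ∈ L.comap (inclA Δ) ∧ l.2.2.2 ∈ L.comap (inclA Δ) := by
  have coact_one := fun l (hl : l ∈ L) =>
    hΔL.coact_one_mem hφ hL hone (fun l hl => (hLU l hl).1) hl
  have last_mem : ∀ l ∈ L, l.2.2.2 ∈ L.comap (inclA Δ) := by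
    intro l hl
    have h₁ := hΔL.coact_oneOp_mem hφ hL hone (fun l hl => (hLU l hl).2.1) hl
    have h₂ := hΔL.coact_oneBar_mem hφ hL hone (fun l hl => (hLU l hl).2.2) h₁
    have h₃ := hLpi _ (coact_one _ h₂)
    exact mem_comap_inclA.mpr (by simpa [piL] using h₃)
  refine ⟨by simpa [piL] using last_mem _ (hLpi l hl), ?_, last_mem l hl⟩
  simpa using neg_mem (last_mem _ (coact_one l hl))

theorem IsBracketDual.isCoideal_comap_inclA (hΔL : IsBracketDual Δ φ ΔL) (hL : IsCoideal ΔL L)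
    (hcomp : ∀ l ∈ L, l.1 ∈ L.comap (inclA Δ) ∧ l.2.1 ∈ L.comap (inclA Δ)) :
    IsCoideal Δ (L.comap (inclA Δ)) := by
  refine hL.comap (inclA Δ) (LinearMap.fst k A _) (LinearMap.fst k A _ ∘ₗ LinearMap.snd k A _)
    (fun l hl => (hcomp l hl).1) (fun l hl => (hcomp l hl).2) fun a => ?_
  have h0 := (WIntDer Δ).zero_mem
  refine TensorProduct.ext_pairT fun f g => ?_
  have hbr : (bracketStar Δ (f, 0, 0, 0) (0, g, 0, 0)).2.2.1 ∈ WIntDer Δ := by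
    rw [bracketStar_inl_oneOp]; exact h0
  have hf : f ∘ₗ LinearMap.fst k A _ = toFunc Δ φ (f, 0, 0, 0) h0 :=
    LinearMap.ext fun x => by simp [toFunc_apply]
  have hg : g ∘ₗ (LinearMap.fst k A _ ∘ₗ LinearMap.snd k A _) = toFunc Δ φ (0, g, 0, 0) h0 :=
    LinearMap.ext fun x => by simp [toFunc_apply]
  rw [pairT_map, hf, hg, ← hΔL _ _ h0 h0 hbr, toFunc_congr (bracketStar_inl_oneOp f g) hbr h0]
  simp [toFunc_apply, inclA, dmul, pairT]

theorem IsBracketDual.inOp_mem (hφ : Function.Surjective φ) (hΔL : IsBracketDual Δ φ ΔL)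
    (hL : IsCoideal ΔL L) (hone : ∀ f, dmul Δ one f = f ∧ dmul Δ f one = f)
    (hann : ∀ l ∈ L, one l.1 = 0) {y : A} (hy : y ∈ L.comap (inclA Δ)) :
    ((0, y, 0, 0) : LKKT Δ) ∈ L := by
  simpa using neg_mem (hΔL.coact_one_mem hφ hL hone hann hy)

theorem IsBracketDual.commMixed_mem (h2 : (2 : k) ≠ 0) (hJ : IsJordanCoalgebra Δ)
    (hφ : IsCommMixedPairing Δ φ)
    (hφsurj : Function.Surjective φ) (hΔL : IsBracketDual Δ φ ΔL) (hL : IsCoideal ΔL L)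
    (hV : IsCoideal Δ (L.comap (inclA Δ))) (hfst : ∀ l ∈ L, l.1 ∈ L.comap (inclA Δ))
    (hop : ∀ y ∈ L.comap (inclA Δ), ((0, y, 0, 0) : LKKT Δ) ∈ L)
    {f : A →ₗ[k] k} (hf : f ∈ (L.comap (inclA Δ)).dualAnnihilator) {x : A}
    (hx : x ∈ L.comap (inclA Δ)) :
    ((0, 0, ⟨commMixed Δ f x, commMixed_mem_CommAA Δ f x⟩, 0) : LKKT Δ) ∈ L := by
  have hann : ∀ l ∈ L, f l.1 = 0 := fun l hl =>
    (Submodule.mem_dualAnnihilator f).mp hf _ (hfst l hl)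
  have hT := hΔL.coact_inl_mem h2 hJ hφ hφsurj hL hann hx
  simpa using neg_mem (add_mem hT (hop _ (ract_mem_of_isCoideal hV hf hx)))

theorem IsBracketDual.le_L2star (h2 : (2 : k) ≠ 0) (hJ : IsJordanCoalgebra Δ)
    (hφ : IsCommMixedPairing Δ φ)
    (hφsurj : Function.Surjective φ) (hΔL : IsBracketDual Δ φ ΔL) (hL : IsCoideal ΔL L)
    (hV : IsCoideal Δ (L.comap (inclA Δ)))
    (hcomp : ∀ l ∈ L,
      l.1 ∈ L.comap (inclA Δ) ∧ l.2.1 ∈ L.comap (inclA Δ) ∧ l.2.2.2 ∈ L.comap (inclA Δ)) :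
    L ≤ L2star Δ (L.comap (inclA Δ)) := by
  intro l hl
  obtain ⟨hl₁, hl₂, hl₄⟩ := hcomp l hl
  refine ⟨hl₁, hl₂, fun f hf => ?_, hl₄⟩
  have hann : ∀ l ∈ L, f l.1 = 0 := fun l hl =>
    (Submodule.mem_dualAnnihilator f).mp hf _ (hcomp l hl).1
  have hT := hΔL.coact_inl_mem h2 hJ hφ hφsurj hL hann hl
  simpa using add_mem (hcomp _ hT).2.2 (ract_mem_of_isCoideal hV hf hl₂)

end ComapInclA

theorem L1star_le {Δ : A →ₗ[k] A ⊗[k] A} {L : Submodule k (LKKT Δ)}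
    (hLpi : ∀ l ∈ L, piL Δ l ∈ L) (hop : ∀ y ∈ L.comap (inclA Δ), ((0, y, 0, 0) : LKKT Δ) ∈ L)
    (hcomm : ∀ f ∈ (L.comap (inclA Δ)).dualAnnihilator, ∀ x ∈ L.comap (inclA Δ),
      ((0, 0, ⟨commMixed Δ f x, commMixed_mem_CommAA Δ f x⟩, 0) : LKKT Δ) ∈ L) :
    L1star Δ (L.comap (inclA Δ)) ≤ L := by
  let ι : ↥(CommAA Δ) →ₗ[k] LKKT Δ :=
    LinearMap.inr k A _ ∘ₗ LinearMap.inr k A _ ∘ₗ LinearMap.inl k _ A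
  have hspan : Submodule.span k {u | ∃ f ∈ (L.comap (inclA Δ)).dualAnnihilator,
      ∃ x ∈ L.comap (inclA Δ), u = commMixed Δ f x} ≤ (L.comap ι).map (CommAA Δ).subtype := by
    rw [Submodule.span_le]
    rintro _ ⟨f, hf, x, hx, rfl⟩
    exact ⟨_, hcomm f hf x hx, rfl⟩
  rintro ⟨x, y, w, z⟩ ⟨hx, hy, hw, hz⟩
  obtain ⟨w', hw', hww⟩ := hspan hw
  obtain rfl : w' = w := Subtype.ext hww
  have hz' : ((0, 0, 0, z) : LKKT Δ) ∈ L := by simpa [piL] using hLpi _ hz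
  simpa [ι] using add_mem (add_mem (add_mem (mem_comap_inclA.mp hx) (hop y hy)) hw') hz'

/-- **Theorem 2 (second half).** If `L` is a coideal of the Lie coalgebra `⟨L(A), Δ_L⟩`
of Theorem 1 that is closed under `π` and contained in `U^⊥` (where `U` is the
three-dimensional simple subalgebra of `L(A*)` spanned by `1, (1)', 1̄`), then
`V = A ∩ L` is a coideal of `⟨A, Δ⟩` and `L₁*(V) ⊆ L ⊆ L₂*(V)`. -/
theorem theorem2_converse {k : Type*} [Field k] {A : Type*} [AddCommGroup A] [Module k A]
    (h2 : (2 : k) ≠ 0) (Δ : A →ₗ[k] A ⊗[k] A) (hJ : IsJordanCoalgebra Δ)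
    (one : A →ₗ[k] k) (hone : ∀ f, dmul Δ one f = f ∧ dmul Δ f one = f)
    (φ : ↥(WIntDer Δ) →ₗ[k] (↥(CommAA Δ) →ₗ[k] k))
    (hφ : ∀ (e : ↥(WIntDer Δ)) (f : A →ₗ[k] k) (a : A) (h : commMixed Δ f a ∈ CommAA Δ),
      φ e ⟨commMixed Δ f a, h⟩ = (e : ((A →ₗ[k] k) →ₗ[k] (A →ₗ[k] k))) f a)
    (hφbij : Function.Bijective φ)
    (ΔL : LKKT Δ →ₗ[k] (LKKT Δ ⊗[k] LKKT Δ))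
    (hΔL : ∀ (f g : (A →ₗ[k] k) × (A →ₗ[k] k) ×
          ((A →ₗ[k] k) →ₗ[k] (A →ₗ[k] k)) × (A →ₗ[k] k))
      (hf : f.2.2.1 ∈ WIntDer Δ) (hg : g.2.2.1 ∈ WIntDer Δ)
      (hbr : (bracketStar Δ f g).2.2.1 ∈ WIntDer Δ) (l : LKKT Δ),
      toFunc Δ φ (bracketStar Δ f g) hbr l
        = pairT (M := LKKT Δ) (toFunc Δ φ f hf) (toFunc Δ φ g hg) (ΔL l))
    (L : Submodule k (LKKT Δ)) (hL : IsCoideal (A := LKKT Δ) ΔL L)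
    (hLpi : ∀ l ∈ L, piL Δ l ∈ L)
    (hLU : ∀ l : LKKT Δ, l ∈ L → one l.1 = 0 ∧ one l.2.1 = 0 ∧ one l.2.2.2 = 0) :
    IsCoideal Δ (Submodule.comap (inclA Δ) L) ∧
    (∀ v ∈ Submodule.comap (inclA Δ) L, one v = 0) ∧
    L1star Δ (Submodule.comap (inclA Δ) L) ≤ L ∧
    L ≤ L2star Δ (Submodule.comap (inclA Δ) L) := by
  have hΔL' : IsBracketDual Δ φ ΔL := hΔL
  have hcomp := fun l (hl : l ∈ L) => hΔL'.components_mem hφbij.2 hL hone hLpi hLU hl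
  have hV := hΔL'.isCoideal_comap_inclA hL fun l hl => ⟨(hcomp l hl).1, (hcomp l hl).2.1⟩
  have hop := fun y (hy : y ∈ L.comap (inclA Δ)) =>
    hΔL'.inOp_mem hφbij.2 hL hone (fun l hl => (hLU l hl).1) hy
  refine ⟨hV, fun v hv => (hLU _ hv).1, L1star_le hLpi hop fun f hf x hx => ?_,
    hΔL'.le_L2star h2 hJ hφ hφbij.2 hL hV hcomp⟩
  exact hΔL'.commMixed_mem h2 hJ hφ hφbij.2 hL hV (fun l hl => (hcomp l hl).1) hop hf hx
end

section
/- Let ⟨A, Δ⟩ be a Jordan coalgebra over a field k of characteristic not 2 whose dual algebra A* is unital, and let B be a subcoalgebra of ⟨A, Δ⟩. Under the isomorphism WIntDer(A*) ≅ ([A*,A])* of Lemma 2, a weakly inner derivation d vanishes on the subspace [A*, B] if and only if (A*)d ⊆ B^⊥; that is, the orthogonal complement of [A*, B] in WIntDer(A*) equals p(B^⊥) = {d ∈ WIntDer(A*) | (A*)d ⊆ B^⊥}. -/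
open TensorProduct

variable {k : Type*} [Field k] {A : Type*} [AddCommGroup A] [Module k A]

/-- Under the isomorphism `WIntDer(A*) ≅ ([A*,A])*` of Lemma 2, a weakly inner derivation
`d` vanishes on `[A*, B]` (for a subcoalgebra `B`) if and only if `(A*)d ⊆ B^⊥`;
i.e. the orthogonal complement of `[A*, B]` in `WIntDer(A*)` is
`p(B^⊥) = {d | (A*)d ⊆ B^⊥}`. -/
theorem orth_commAB_eq_pBperp {k : Type*} [Field k] {A : Type*} [AddCommGroup A] [Module k A]
    (h2 : (2 : k) ≠ 0) (Δ : A →ₗ[k] A ⊗[k] A) (hJ : IsJordanCoalgebra Δ)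
    (one : A →ₗ[k] k) (hone : ∀ f, dmul Δ one f = f ∧ dmul Δ f one = f)
    (B : Submodule k A) (hB : IsSubcoalgebra Δ B)
    (φ : ↥(WIntDer Δ) →ₗ[k] (↥(CommAA Δ) →ₗ[k] k))
    (hφ : ∀ (e : ↥(WIntDer Δ)) (f : A →ₗ[k] k) (a : A) (h : commMixed Δ f a ∈ CommAA Δ),
      φ e ⟨commMixed Δ f a, h⟩ = (e : ((A →ₗ[k] k) →ₗ[k] (A →ₗ[k] k))) f a)
    (hφbij : Function.Bijective φ)
    (d : (A →ₗ[k] k) →ₗ[k] (A →ₗ[k] k)) (hd : d ∈ WIntDer Δ) :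
    (∀ v : ↥(CommAA Δ),
        (v : ((A →ₗ[k] k) × A) →ₗ[k] ((A →ₗ[k] k) × A)) ∈
          Submodule.span k {u | ∃ (f : A →ₗ[k] k), ∃ b ∈ B, u = commMixed Δ f b} →
        φ ⟨d, hd⟩ v = 0)
      ↔ (∀ f : A →ₗ[k] k, d f ∈ B.dualAnnihilator) := by
  constructor
  · intro h f
    rw [Submodule.mem_dualAnnihilator]
    intro b hb
    have hmem : commMixed Δ f b ∈ CommAA Δ := Submodule.subset_span ⟨f, b, rfl⟩
    have hS : (commMixed Δ f b) ∈
        Submodule.span k {u | ∃ (f : A →ₗ[k] k), ∃ b ∈ B, u = commMixed Δ f b} :=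
      Submodule.subset_span ⟨f, b, hb, rfl⟩
    have := h ⟨commMixed Δ f b, hmem⟩ hS
    rwa [hφ ⟨d, hd⟩ f b hmem] at this
  · intro h v hv
    set W : Submodule k ↥(CommAA Δ) :=
      Submodule.span k {w : ↥(CommAA Δ) | ∃ (f : A →ₗ[k] k), ∃ b ∈ B,
        (w : ((A →ₗ[k] k) × A) →ₗ[k] ((A →ₗ[k] k) × A)) = commMixed Δ f b} with hW
    have hmap : W.map (CommAA Δ).subtype
        = Submodule.span k {u | ∃ (f : A →ₗ[k] k), ∃ b ∈ B, u = commMixed Δ f b} := by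
      rw [hW, Submodule.map_span]
      congr 1
      ext u
      constructor
      · rintro ⟨w, ⟨f, b, hb, hw⟩, rfl⟩; exact ⟨f, b, hb, hw.symm ▸ rfl⟩
      · rintro ⟨f, b, hb, rfl⟩
        exact ⟨⟨commMixed Δ f b, Submodule.subset_span ⟨f, b, rfl⟩⟩, ⟨f, b, hb, rfl⟩, rfl⟩
    have hvW : v ∈ W := by
      have hm : (v : ((A →ₗ[k] k) × A) →ₗ[k] ((A →ₗ[k] k) × A)) ∈
          W.map (CommAA Δ).subtype := by rw [hmap]; exact hv
      obtain ⟨w, hw, hwe⟩ := hm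
      have : w = v := Subtype.ext hwe
      rwa [this] at hw
    have hle : W ≤ LinearMap.ker (φ ⟨d, hd⟩) := by
      rw [hW, Submodule.span_le]
      rintro w ⟨f, b, hb, hw⟩
      simp only [SetLike.mem_coe, LinearMap.mem_ker]
      have hmem : commMixed Δ f b ∈ CommAA Δ := hw ▸ w.2
      have hwe : w = ⟨commMixed Δ f b, hmem⟩ := Subtype.ext hw
      rw [hwe, hφ]
      exact (Submodule.mem_dualAnnihilator (d f)).mp (h f) b hb
    exact hle hvW
end

section
/- Let ⟨A, Δ⟩ be a Jordan coalgebra over a field k of characteristic not 2 whose dual algebra A* is unital, and let V be a coideal of ⟨A, Δ⟩. Under the isomorphism WIntDer(A*) ≅ ([A*,A])* of Lemma 2, a weakly inner derivation d vanishes on the subspace [V^⊥, V] if and only if V^⊥d ⊆ V^⊥; that is, the orthogonal complement of [V^⊥, V] in WIntDer(A*) equals d(V^⊥) = {d ∈ WIntDer(A*) | V^⊥d ⊆ V^⊥}. -/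
open TensorProduct

variable {k : Type*} [Field k] {A : Type*} [AddCommGroup A] [Module k A]

/-- Under the isomorphism `WIntDer(A*) ≅ ([A*,A])*` of Lemma 2, a weakly inner derivation
`d` vanishes on `[V^⊥, V]` (for a coideal `V`) if and only if `V^⊥ d ⊆ V^⊥`;
i.e. the orthogonal complement of `[V^⊥, V]` in `WIntDer(A*)` is
`d(V^⊥) = {d | V^⊥ d ⊆ V^⊥}`. -/
theorem orth_commVperpV_eq_dVperp {k : Type*} [Field k] {A : Type*} [AddCommGroup A]
    [Module k A]
    (h2 : (2 : k) ≠ 0) (Δ : A →ₗ[k] A ⊗[k] A) (hJ : IsJordanCoalgebra Δ)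
    (one : A →ₗ[k] k) (hone : ∀ f, dmul Δ one f = f ∧ dmul Δ f one = f)
    (V : Submodule k A) (hV : IsCoideal Δ V) (hV1 : ∀ v ∈ V, one v = 0)
    (φ : ↥(WIntDer Δ) →ₗ[k] (↥(CommAA Δ) →ₗ[k] k))
    (hφ : ∀ (e : ↥(WIntDer Δ)) (f : A →ₗ[k] k) (a : A) (h : commMixed Δ f a ∈ CommAA Δ),
      φ e ⟨commMixed Δ f a, h⟩ = (e : ((A →ₗ[k] k) →ₗ[k] (A →ₗ[k] k))) f a)
    (hφbij : Function.Bijective φ)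
    (d : (A →ₗ[k] k) →ₗ[k] (A →ₗ[k] k)) (hd : d ∈ WIntDer Δ) :
    (∀ v : ↥(CommAA Δ),
        (v : ((A →ₗ[k] k) × A) →ₗ[k] ((A →ₗ[k] k) × A)) ∈
          Submodule.span k {u | ∃ f ∈ V.dualAnnihilator, ∃ x ∈ V, u = commMixed Δ f x} →
        φ ⟨d, hd⟩ v = 0)
      ↔ (∀ f ∈ V.dualAnnihilator, d f ∈ V.dualAnnihilator) := by
  constructor
  · intro hL f hf
    rw [Submodule.mem_dualAnnihilator]
    intro v hv
    have hC : commMixed Δ f v ∈ CommAA Δ := Submodule.subset_span ⟨f, v, rfl⟩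
    have hS : commMixed Δ f v ∈
        Submodule.span k {u | ∃ g ∈ V.dualAnnihilator, ∃ x ∈ V, u = commMixed Δ g x} :=
      Submodule.subset_span ⟨f, hf, v, hv, rfl⟩
    have := hL ⟨commMixed Δ f v, hC⟩ hS
    rwa [hφ ⟨d, hd⟩ f v hC] at this
  · intro hR v hv
    have key : ∀ u : ((A →ₗ[k] k) × A) →ₗ[k] ((A →ₗ[k] k) × A),
        u ∈ Submodule.span k {u | ∃ g ∈ V.dualAnnihilator, ∃ x ∈ V, u = commMixed Δ g x} →
        ∃ hu : u ∈ CommAA Δ, φ ⟨d, hd⟩ ⟨u, hu⟩ = 0 := by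
      intro u hu
      refine Submodule.span_induction ?_ ?_ ?_ ?_ hu
      · rintro w ⟨g, hg, x, hx, rfl⟩
        refine ⟨Submodule.subset_span ⟨g, x, rfl⟩, ?_⟩
        rw [hφ ⟨d, hd⟩ g x (Submodule.subset_span ⟨g, x, rfl⟩)]
        have h' := hR g hg
        rw [Submodule.mem_dualAnnihilator] at h'
        exact h' x hx
      · exact ⟨Submodule.zero_mem _, by
          have : (⟨0, Submodule.zero_mem _⟩ : ↥(CommAA Δ)) = 0 := rfl
          rw [this]; simp⟩
      · rintro x y _ _ ⟨hxC, hx0⟩ ⟨hyC, hy0⟩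
        refine ⟨Submodule.add_mem _ hxC hyC, ?_⟩
        have : (⟨x + y, Submodule.add_mem _ hxC hyC⟩ : ↥(CommAA Δ)) =
            ⟨x, hxC⟩ + ⟨y, hyC⟩ := rfl
        rw [this, map_add, hx0, hy0, add_zero]
      · rintro c x _ ⟨hxC, hx0⟩
        refine ⟨Submodule.smul_mem _ c hxC, ?_⟩
        have : (⟨c • x, Submodule.smul_mem _ c hxC⟩ : ↥(CommAA Δ)) =
            c • ⟨x, hxC⟩ := rfl
        rw [this, map_smul, hx0, smul_zero]
    obtain ⟨hu, h0⟩ := key (v : ((A →ₗ[k] k) × A) →ₗ[k] ((A →ₗ[k] k) × A)) hv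
    have : (⟨(v : ((A →ₗ[k] k) × A) →ₗ[k] ((A →ₗ[k] k) × A)), hu⟩ : ↥(CommAA Δ)) = v :=
      Subtype.ext rfl
    rwa [this] at h0
end

section
/- Let ⟨A, Δ⟩ be a Jordan coalgebra over a field k of characteristic not 2. Then for any elements x, y, z ∈ A* and a ∈ A, the equality ⟨(x, y, z), a⟩ = −⟨y, (x, a, z)⟩ holds, where (x, y, z) = (xy)z − x(yz) is the associator in the dual algebra A*, and (x, a, z) = (x·a)·z − x·(a·z) is the associator computed in the null extension C = A* ⊕ A. -/
open TensorProduct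

variable {k : Type*} [Field k] {A : Type*} [AddCommGroup A] [Module k A]

theorem eval_ract (Δ : A →ₗ[k] A ⊗[k] A) (z f : A →ₗ[k] k) (b : A) :
    f (ract Δ z b) = dmul Δ z f b := by
  simp only [ract, dmul, LinearMap.comp_apply]
  generalize Δ b = t
  induction t using TensorProduct.induction_on with
  | zero => simp
  | tmul a₁ a₂ => simp [mul_comm]
  | add s t hs ht => simp only [map_add, hs, ht]

theorem eval_lact (Δ : A →ₗ[k] A ⊗[k] A) (x g : A →ₗ[k] k) (b : A) :
    g (lact Δ x b) = dmul Δ g x b := by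
  simp only [lact, dmul, LinearMap.comp_apply]
  generalize Δ b = t
  induction t using TensorProduct.induction_on with
  | zero => simp
  | tmul a₁ a₂ => simp [mul_comm]
  | add s t hs ht => simp only [map_add, hs, ht]

/-- For a Jordan coalgebra `⟨A, Δ⟩` (char k ≠ 2): `⟨(x,y,z), a⟩ = -⟨y, (x,a,z)⟩`,
where `(x,y,z) = (xy)z - x(yz)` is the associator in the dual algebra `A*`, and
`(x,a,z) = (x·a)·z - x·(a·z)` is the associator computed in the null extension `C = A* ⊕ A`. -/
theorem assoc_pairing {k : Type*} [Field k] {A : Type*} [AddCommGroup A] [Module k A]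
    (h2 : (2 : k) ≠ 0) (Δ : A →ₗ[k] A ⊗[k] A) (hJ : IsJordanCoalgebra Δ)
    (x y z : A →ₗ[k] k) (a : A) :
    (dmul Δ (dmul Δ x y) z - dmul Δ x (dmul Δ y z)) a
      = - y (ract Δ z (lact Δ x a) - lact Δ x (ract Δ z a)) := by
  obtain ⟨comm, _⟩ := hJ
  rw [map_sub, eval_ract Δ z y, eval_lact Δ x (dmul Δ z y), eval_lact Δ x y,
    eval_ract Δ z (dmul Δ y x)]
  rw [LinearMap.sub_apply, comm (dmul Δ x y) z, comm x y, comm x (dmul Δ y z),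
    comm y z]
  ring
end
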